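/- Let n be an odd natural number with n ≥ 51, and let G be the circulant graph C_n({1, 3, n−3, n−1}). Then λ_{(3,2,1)}(G) ≤ 13. -/

import Mathlib

/-- The circulant graph `C_n(S)`: vertices `u_1, …, u_n` (modelled as `Fin n`),
with `u_i` adjacent to `u_j` iff `|i - j| ∈ S`. -/
def circulant (n : ℕ) (S : Finset ℕ) : SimpleGraph (Fin n) where
  Adj i j := i ≠ j ∧ ((i : ℤ) - (j : ℤ)).natAbs ∈ S
  symm := by
    constructor
    intro i j h
    refine ⟨h.1.symm, ?_⟩
    have h2 := h.2
    rwa [← Int.natAbs_neg, neg_sub]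
  loopless := by
    constructor
    intro i h
    exact h.1 rfl

/-- An `L(3,2,1)`-labeling of `G`: an assignment of nonnegative integers to the
vertices such that `|f x - f y| > 3 - dist_G(x, y)` for every pair of distinct
vertices `x, y`. -/
def IsL321Labeling {V : Type*} (G : SimpleGraph V) (f : V → ℕ) : Prop :=
  ∀ x y : V, x ≠ y → (3 : ℤ) - G.dist x y < |(f x : ℤ) - (f y : ℤ)|

/-- The span of a labeling `f`: the difference between the largest and the
smallest used value. -/
noncomputable def labelingSpan {V : Type*} [Fintype V] (f : V → ℕ) : ℕ :=
  Finset.univ.sup f - sInf (Set.range f)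

/-- `λ_{(3,2,1)}(G)`: the minimum span among all `L(3,2,1)`-labelings of `G`. -/
noncomputable def lambda321 {V : Type*} [Fintype V] (G : SimpleGraph V) : ℕ :=
  sInf {s : ℕ | ∃ f : V → ℕ, IsL321Labeling G f ∧ s = labelingSpan f}

/-- Required label gap for circular distance `m`. -/
def cc (m : ℕ) : ℕ :=
  if m = 1 ∨ m = 3 then 3
  else if m = 2 ∨ m = 4 ∨ m = 6 then 2
  else if m = 5 ∨ m = 7 ∨ m = 9 then 1
  else 0

/-- Natural-number distance between labels. -/
def dd (a b : ℕ) : ℕ := (a - b) + (b - a)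

lemma edge_step {n : ℕ} (hn : 51 ≤ n) {x y : Fin n}
    (h : (circulant n {1, 3, n - 3, n - 1}).Adj x y) :
    ∃ e : ℤ, e.natAbs ≤ 3 ∧ e.natAbs % 2 = 1 ∧ (n:ℤ) ∣ ((x.val:ℤ) - y.val - e) := by
  obtain ⟨-, hmem⟩ := h
  have hxy : ((x : ℤ) - (y : ℤ)) = ((x.val : ℤ) - y.val) := rfl
  rw [hxy] at hmem
  simp only [Finset.mem_insert, Finset.mem_singleton] at hmem
  rcases Int.natAbs_eq ((x.val : ℤ) - y.val) with hd | hd <;>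
  rcases hmem with h1 | h1 | h1 | h1 <;> rw [h1] at hd
  · exact ⟨1, by norm_num, by norm_num, ⟨0, by omega⟩⟩
  · exact ⟨3, by norm_num, by norm_num, ⟨0, by omega⟩⟩
  · exact ⟨-3, by norm_num, by norm_num, ⟨1, by omega⟩⟩
  · exact ⟨-1, by norm_num, by norm_num, ⟨1, by omega⟩⟩
  · exact ⟨-1, by norm_num, by norm_num, ⟨0, by omega⟩⟩
  · exact ⟨-3, by norm_num, by norm_num, ⟨0, by omega⟩⟩
  · exact ⟨3, by norm_num, by norm_num, ⟨-1, by omega⟩⟩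
  · exact ⟨1, by norm_num, by norm_num, ⟨-1, by omega⟩⟩

lemma walk_sum {n : ℕ} (hn : 51 ≤ n) {x y : Fin n}
    (p : (circulant n {1, 3, n - 3, n - 1}).Walk x y) :
    ∃ s : ℤ, s.natAbs ≤ 3 * p.length ∧ s % 2 = (p.length : ℤ) % 2 ∧
      (n:ℤ) ∣ ((x.val:ℤ) - y.val - s) := by
  induction p with
  | nil => exact ⟨0, by simp, by simp, by simp⟩
  | @cons u v c h p ih =>
    obtain ⟨e, he1, he2, he3⟩ := edge_step hn h
    obtain ⟨s, hs1, hs2, hs3⟩ := ih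
    refine ⟨e + s, ?_, ?_, ?_⟩
    · have := Int.natAbs_add_le e s
      simp only [SimpleGraph.Walk.length_cons]
      omega
    · simp only [SimpleGraph.Walk.length_cons]
      omega
    · have heq : (u.val:ℤ) - c.val - (e + s) =
        ((u.val:ℤ) - v.val - e) + ((v.val:ℤ) - c.val - s) := by ring
      rw [heq]
      exact dvd_add he3 hs3

lemma circ_reach {n : ℕ} (hn : 51 ≤ n) (x y : Fin n) :
    (circulant n {1, 3, n - 3, n - 1}).Reachable x y := by
  suffices h : ∀ k (hk : k < n),
      (circulant n {1, 3, n - 3, n - 1}).Reachable ⟨0, by omega⟩ ⟨k, hk⟩ by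
    have hx := h x.val x.isLt
    have hy := h y.val y.isLt
    simpa using hx.symm.trans hy
  intro k
  induction k with
  | zero => intro hk; exact SimpleGraph.Reachable.refl _
  | succ k ih =>
    intro hk
    have hk' : k < n := by omega
    refine (ih hk').trans ?_
    have hadj : (circulant n {1, 3, n - 3, n - 1}).Adj ⟨k, hk'⟩ ⟨k + 1, hk⟩ := by
      refine ⟨by simp [Fin.ext_iff], ?_⟩
      have : (((⟨k, hk'⟩ : Fin n) : ℤ) - ((⟨k + 1, hk⟩ : Fin n) : ℤ)).natAbs = 1 := by
        show (((k:ℕ) : ℤ) - ((k+1 : ℕ) : ℤ)).natAbs = 1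
        push_cast
        omega
      rw [this]
      simp
    exact hadj.reachable

lemma ccL : ∀ m, m < 10 → ∀ L, L < 4 → 1 ≤ m → m ≤ 3 * L → m % 2 = L % 2 →
    4 ≤ cc m + L := by decide

def wf : ℕ → ℕ := fun t => [6, 0, 9, 3, 11, 5, 13, 8, 2, 10, 4, 12].getD t 0

def x41 : ℕ → ℕ := fun t =>
  [7, 1, 9, 3, 11, 6, 0, 8, 13, 10, 5, 2, 7, 12, 9, 4, 1, 6, 11, 8, 3, 0, 5, 13, 7, 2, 10, 4, 12, 6, 1, 9, 3, 11, 5, 13, 8, 2, 10, 4, 12].getD t 0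

def x51 : ℕ → ℕ := fun t =>
  [7, 1, 9, 3, 11, 6, 0, 8, 13, 10, 5, 2, 7, 12, 9, 4, 1, 6, 13, 10, 3, 0, 7, 12, 9, 4, 1, 6, 11, 8, 3, 0, 5, 13, 7, 2, 10, 4, 12, 6, 1, 9, 3, 11, 5, 13, 8, 2, 10, 4, 12].getD t 0

def x55 : ℕ → ℕ := fun t =>
  [6, 1, 9, 3, 11, 5, 0, 7, 2, 10, 4, 13, 6, 1, 8, 3, 12, 5, 0, 7, 2, 9, 4, 11, 6, 13, 8, 1, 10, 5, 12, 7, 0, 9, 3, 11, 6, 13, 8, 2, 10, 4, 12, 7, 1, 9, 3, 11, 5, 13, 8, 2, 10, 4, 12].getD t 0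

def x57 : ℕ → ℕ := fun t =>
  [7, 0, 9, 3, 11, 6, 13, 8, 1, 10, 5, 12, 7, 2, 9, 0, 13, 4, 11, 8, 1, 6, 3, 10, 13, 0, 5, 2, 7, 12, 9, 4, 1, 6, 11, 8, 3, 0, 5, 13, 7, 2, 10, 4, 12, 6, 1, 9, 3, 11, 5, 13, 8, 2, 10, 4, 12].getD t 0

def x59 : ℕ → ℕ := fun t =>
  [6, 1, 9, 3, 11, 5, 0, 7, 2, 10, 4, 13, 6, 1, 9, 3, 12, 5, 0, 7, 2, 13, 4, 11, 6, 9, 0, 3, 12, 5, 8, 1, 10, 13, 4, 7, 2, 9, 0, 11, 6, 13, 8, 1, 10, 4, 12, 7, 0, 9, 3, 11, 5, 13, 8, 2, 10, 4, 12].getD t 0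

def x61 : ℕ → ℕ := fun t =>
  [7, 1, 9, 3, 11, 6, 13, 8, 0, 10, 5, 12, 7, 2, 9, 4, 13, 6, 1, 10, 3, 12, 7, 0, 9, 4, 13, 6, 1, 10, 3, 12, 7, 0, 9, 4, 11, 6, 1, 8, 3, 13, 5, 0, 7, 2, 10, 4, 12, 6, 1, 9, 3, 11, 5, 13, 8, 2, 10, 4, 12].getD t 0

lemma main_aux (n K : ℕ) (hn : 51 ≤ n) (hK41 : 41 ≤ K) (hKn : K ≤ n)
    (hdvd : 12 ∣ n - K) (w x : ℕ → ℕ)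
    (Hw13 : ∀ t, t < 12 → w t ≤ 13) (Hx13 : ∀ t, t < K → x t ≤ 13)
    (H1 : ∀ p, p < 12 → ∀ m, m < 10 → 1 ≤ m → cc m ≤ dd (w ((p + m) % 12)) (w p))
    (H2 : ∀ t, t < 10 → ∀ m, m < 10 → 1 ≤ t → t ≤ m → cc m ≤ dd (x (m - t)) (w (12 - t)))
    (H3 : ∀ u, u < K → ∀ m, m < 10 → 1 ≤ m → u + m < K → cc m ≤ dd (x (u + m)) (x u))
    (H4 : ∀ m, m < 10 → ∀ j, j < m → cc m ≤ dd (x (K - m + j)) (w j))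
    (H5 : ∀ m, m < 10 → ∀ j, j < m → cc m ≤ dd (x (K - m + j)) (x j)) :
    lambda321 (circulant n {1, 3, n - 3, n - 1}) ≤ 13 := by
  set A : ℕ := n - K with hA
  have hAK : A + K = n := by omega
  have hA12 : 12 ∣ A := hdvd
  set F : ℕ → ℕ := fun i => if i < A then w (i % 12) else x (i - A) with hF
  have dd_comm : ∀ a b : ℕ, dd a b = dd b a := by intro a b; unfold dd; omega
  -- key lemma, ordered case A (i = j + m)
  have keyA : ∀ j m : ℕ, 1 ≤ m → m ≤ 9 → j + m < n → cc m ≤ dd (F (j + m)) (F j) := by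
    intro j m h1 h9 hjm
    by_cases hA1 : j + m < A
    · have hj : j < A := by omega
      have e1 : F (j + m) = w ((j + m) % 12) := if_pos hA1
      have e2 : F j = w (j % 12) := if_pos hj
      have e3 : (j + m) % 12 = (j % 12 + m) % 12 := by omega
      rw [e1, e2, e3]
      exact H1 (j % 12) (Nat.mod_lt _ (by norm_num)) m (by omega) h1
    · by_cases hj : j < A
      · have ht1 : 1 ≤ A - j := by omega
        have ht9 : A - j ≤ 9 := by omega
        have e1 : F (j + m) = x (j + m - A) := if_neg (by omega)
        have e2 : F j = w (j % 12) := if_pos hj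
        have e3 : j + m - A = m - (A - j) := by omega
        have e4 : j % 12 = 12 - (A - j) := by omega
        rw [e1, e2, e3, e4]
        exact H2 (A - j) (by omega) m (by omega) ht1 (by omega)
      · have e1 : F (j + m) = x (j - A + m) := by
          rw [hF]; simp only
          rw [if_neg (by omega)]
          congr 1
          omega
        have e2 : F j = x (j - A) := if_neg (by omega)
        rw [e1, e2]
        exact H3 (j - A) (by omega) m (by omega) h1 (by omega)
  -- key lemma, wrap case (i = n - m + j with j < m)
  have keyB : ∀ j m : ℕ, 1 ≤ m → m ≤ 9 → j < m → cc m ≤ dd (F (n - m + j)) (F j) := by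
    intro j m h1 h9 hj
    have e1 : F (n - m + j) = x (K - m + j) := by
      rw [hF]; simp only
      rw [if_neg (by omega)]
      congr 1
      omega
    by_cases hjA : j < A
    · have e2 : F j = w (j % 12) := if_pos hjA
      have e3 : j % 12 = j := Nat.mod_eq_of_lt (by omega)
      rw [e1, e2, e3]
      exact H4 m (by omega) j hj
    · have e2 : F j = x (j - A) := if_neg hjA
      have e3 : j - A = j := by omega
      rw [e1, e2, e3]
      exact H5 m (by omega) j hj
  have key : ∀ i j m : ℕ, i < n → j < n → 1 ≤ m → m ≤ 9 →
      (i = j + m ∨ j = i + m ∨ i + m = j + n ∨ j + m = i + n) →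
      cc m ≤ dd (F i) (F j) := by
    intro i j m hi hj h1 h9 hcase
    rcases hcase with h | h | h | h
    · rw [h]; exact keyA j m h1 h9 (by omega)
    · rw [dd_comm, h]; exact keyA i m h1 h9 (by omega)
    · have hj' : j < m := by omega
      have hi' : i = n - m + j := by omega
      rw [hi']; exact keyB j m h1 h9 hj'
    · have hi' : i < m := by omega
      have hj' : j = n - m + i := by omega
      rw [dd_comm, hj']; exact keyB i m h1 h9 hi'
  -- the labeling
  set f : Fin n → ℕ := fun v => F v.val with hf
  have hf13 : ∀ v : Fin n, f v ≤ 13 := by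
    intro v
    rw [hf, hF]
    simp only
    by_cases hv : v.val < A
    · rw [if_pos hv]; exact Hw13 _ (Nat.mod_lt _ (by norm_num))
    · rw [if_neg hv]
      refine Hx13 _ ?_
      have := v.isLt
      omega
  have hlab : IsL321Labeling (circulant n {1, 3, n - 3, n - 1}) f := by
    intro a b hab
    by_contra hcon
    push_neg at hcon
    set D : ℕ := ((f a : ℤ) - f b).natAbs with hD
    have habs : |(f a : ℤ) - (f b : ℤ)| = (D : ℤ) := by rw [hD]; exact (Int.abs_eq_natAbs _)
    rw [habs] at hcon
    set L : ℕ := (circulant n {1, 3, n - 3, n - 1}).dist a b with hL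
    have hdist3 : L + D ≤ 3 := by omega
    obtain ⟨p, hp⟩ := (circ_reach hn a b).exists_walk_length_eq_dist
    obtain ⟨s, hs1, hs2, hs3⟩ := walk_sum hn p
    rw [hp, ← hL] at hs1 hs2
    have hne : s ≠ 0 := by
      intro h0
      rw [h0, sub_zero] at hs3
      have hz : (a.val : ℤ) - b.val = 0 := by
        refine Int.eq_zero_of_abs_lt_dvd hs3 ?_
        have ha := a.isLt
        have hb := b.isLt
        rw [Int.abs_eq_natAbs]
        omega
      exact hab (Fin.ext (by omega))
    set m : ℕ := s.natAbs with hm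
    have hm1 : 1 ≤ m := by omega
    have hm9 : m ≤ 9 := by omega
    obtain ⟨k, hk⟩ := hs3
    have ha := a.isLt
    have hb := b.isLt
    have hkb : k = -1 ∨ k = 0 ∨ k = 1 := by
      by_contra hcon2
      push_neg at hcon2
      have h2 : 2 ≤ k ∨ k ≤ -2 := by omega
      have hb1 : ((a.val:ℤ) - b.val - s) < 2 * n := by omega
      have hb2 : -(2 * (n:ℤ)) < ((a.val:ℤ) - b.val - s) := by omega
      rcases h2 with h2 | h2
      · nlinarith
      · nlinarith
    have hs_eq : s = (m : ℤ) ∨ s = -(m : ℤ) := Int.natAbs_eq s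
    have hcase : a.val = b.val + m ∨ b.val = a.val + m ∨
        a.val + m = b.val + n ∨ b.val + m = a.val + n := by
      rcases hkb with h | h | h <;> rcases hs_eq with h' | h' <;> subst h <;> omega
    have hKey := key a.val b.val m a.isLt b.isLt hm1 hm9 hcase
    have hdd : dd (f a) (f b) = D := by unfold dd; omega
    have hfa : F a.val = f a := rfl
    have hfb : F b.val = f b := rfl
    rw [hfa, hfb, hdd] at hKey
    have hccL := ccL m (by omega) L (by omega) hm1 (by omega) (by omega)
    omega
  -- span bound and conclusion
  have hspan : labelingSpan f ≤ 13 := by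
    unfold labelingSpan
    have hsup : Finset.univ.sup f ≤ 13 := Finset.sup_le (fun v _ => hf13 v)
    omega
  have hmem : labelingSpan f ∈
      {s : ℕ | ∃ g : Fin n → ℕ,
        IsL321Labeling (circulant n {1, 3, n - 3, n - 1}) g ∧ s = labelingSpan g} :=
    ⟨f, hlab, rfl⟩
  exact le_trans (Nat.sInf_le hmem) hspan

theorem lambda321_circulant_1_3_odd_large (n : ℕ) (hno : Odd n) (hn : 51 ≤ n) :
    lambda321 (circulant n {1, 3, n - 3, n - 1}) ≤ 13 := by
  have h2 : n % 2 = 1 := Nat.odd_iff.mp hno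
  have h12 : n % 12 = 1 ∨ n % 12 = 3 ∨ n % 12 = 5 ∨ n % 12 = 7 ∨ n % 12 = 9 ∨ n % 12 = 11 := by
    omega
  rcases h12 with h | h | h | h | h | h
  · exact main_aux n 61 hn (by norm_num) (by omega) (by omega) wf x61
      (by decide) (by decide) (by decide) (by decide) (by decide) (by decide) (by decide)
  · exact main_aux n 51 hn (by norm_num) (by omega) (by omega) wf x51
      (by decide) (by decide) (by decide) (by decide) (by decide) (by decide) (by decide)
  · exact main_aux n 41 hn (by norm_num) (by omega) (by omega) wf x41
      (by decide) (by decide) (by decide) (by decide) (by decide) (by decide) (by decide)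
  · exact main_aux n 55 hn (by norm_num) (by omega) (by omega) wf x55
      (by decide) (by decide) (by decide) (by decide) (by decide) (by decide) (by decide)
  · exact main_aux n 57 hn (by norm_num) (by omega) (by omega) wf x57
      (by decide) (by decide) (by decide) (by decide) (by decide) (by decide) (by decide)
  · exact main_aux n 59 hn (by norm_num) (by omega) (by omega) wf x59
      (by decide) (by decide) (by decide) (by decide) (by decide) (by decide) (by decide)
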